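/- Let 0 ≤ k < r and p ≥ 1, and set N = pk(r−k)/(2r). Then for any integers k₁,…,k_r summing to k, (p/(2r))∑_{α<β}(k_α−k_β)² ≥ N, with equality if and only if each k_α ∈ {0,1} (so exactly k of them equal 1). -/

import Mathlib

/-!
By Lagrange's identity the pairwise sum equals `r ∑ kₐ² - k²`, while `N · 2r/p = r k - k²`.
So the claim reduces to `∑ kₐ² ≥ ∑ kₐ = k`, which holds termwise because `n ≤ n²` for every
integer `n`, with equality exactly when `n ∈ {0, 1}`.
-/

open Finset

theorem Finset.two_nsmul_sum_filter_lt_eq_sum_sum {ι M : Type*} [LinearOrder ι] [Fintype ι]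
    [AddCommMonoid M] (g : ι → ι → M) (hsymm : ∀ i j, g i j = g j i) (hdiag : ∀ i, g i i = 0) :
    2 • ∑ x ∈ univ.filter (fun x : ι × ι => x.1 < x.2), g x.1 x.2 = ∑ i, ∑ j, g i j := by
  have hswap : ∑ x ∈ univ.filter (fun x : ι × ι => x.1 < x.2), g x.1 x.2
      = ∑ x ∈ univ.filter (fun x : ι × ι => x.2 < x.1), g x.1 x.2 :=
    sum_nbij' Prod.swap Prod.swap (by simp) (by simp) (by simp) (by simp)
      (fun x _ => hsymm _ _)
  have hdiagonal : ∑ x ∈ univ.filter (fun x : ι × ι => ¬x.1 < x.2 ∧ ¬x.2 < x.1), g x.1 x.2 = 0 :=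
    sum_eq_zero fun x hx => by
      obtain ⟨h₁, h₂⟩ := (mem_filter.mp hx).2
      rw [le_antisymm (not_lt.mp h₂) (not_lt.mp h₁), hdiag]
  have hgt : univ.filter (fun x : ι × ι => ¬x.1 < x.2 ∧ x.2 < x.1)
      = univ.filter (fun x : ι × ι => x.2 < x.1) := by
    ext x
    simpa using fun h => h.le
  rw [← Fintype.sum_prod_type', ← sum_filter_add_sum_filter_not univ (fun x : ι × ι => x.1 < x.2),
    ← sum_filter_add_sum_filter_not (univ.filter fun x : ι × ι => ¬x.1 < x.2)
      (fun x : ι × ι => x.2 < x.1),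
    filter_filter, filter_filter, hdiagonal, add_zero, hgt, ← hswap, two_nsmul]

theorem Finset.sum_sum_sub_sq {ι R : Type*} [Fintype ι] [CommRing R] (f : ι → R) :
    ∑ i, ∑ j, (f i - f j) ^ 2 = 2 * (Fintype.card ι * ∑ i, f i ^ 2 - (∑ i, f i) ^ 2) := by
  simp only [sub_sq, sum_add_distrib, sum_sub_distrib, sum_const, card_univ, ← mul_sum, ← sum_mul,
    nsmul_eq_mul]
  ring

theorem Finset.sum_filter_lt_sub_sq {ι R : Type*} [LinearOrder ι] [Fintype ι] [CommRing R]
    [IsAddTorsionFree R] (f : ι → R) :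
    ∑ x ∈ univ.filter (fun x : ι × ι => x.1 < x.2), (f x.1 - f x.2) ^ 2
      = Fintype.card ι * ∑ i, f i ^ 2 - (∑ i, f i) ^ 2 := by
  apply nsmul_right_injective two_ne_zero
  dsimp only
  rw [two_nsmul_sum_filter_lt_eq_sum_sum (fun i j => (f i - f j) ^ 2) (fun i j => by ring)
    (fun i => by ring), sum_sum_sub_sq, two_nsmul, two_mul]

theorem Int.sum_le_sum_sq {ι : Type*} (s : Finset ι) (f : ι → ℤ) :
    ∑ i ∈ s, f i ≤ ∑ i ∈ s, f i ^ 2 :=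
  sum_le_sum fun i _ => Int.le_self_sq (f i)

theorem Int.sum_sq_eq_sum_iff {ι : Type*} (s : Finset ι) (f : ι → ℤ) :
    ∑ i ∈ s, f i ^ 2 = ∑ i ∈ s, f i ↔ ∀ i ∈ s, f i = 0 ∨ f i = 1 := by
  rw [eq_comm, sum_eq_sum_iff_of_le fun i _ => Int.le_self_sq (f i)]
  refine forall₂_congr fun i _ => ⟨fun h => eq_zero_or_one_of_sq_eq_self h.symm, ?_⟩
  rintro (h | h) <;> simp [h]

theorem minimal_discriminant_bound_general (p r k : ℕ) (hp : 1 ≤ p) (hr : 1 ≤ r)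
    (kk : Fin r → ℤ) (hsum : ∑ α, kk α = (k : ℤ)) :
    (((p : ℚ) * k * (r - k)) / (2 * r) ≤
        ((p : ℚ) / (2 * r)) *
          ∑ x ∈ Finset.univ.filter (fun x : Fin r × Fin r => x.1 < x.2),
            ((kk x.1 : ℚ) - (kk x.2 : ℚ)) ^ 2) ∧
    ((((p : ℚ) / (2 * r)) *
          ∑ x ∈ Finset.univ.filter (fun x : Fin r × Fin r => x.1 < x.2),
            ((kk x.1 : ℚ) - (kk x.2 : ℚ)) ^ 2 =
        ((p : ℚ) * k * (r - k)) / (2 * r)) ↔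
      ∀ α, kk α = 0 ∨ kk α = 1) := by
  have hpairs : ∑ x ∈ univ.filter (fun x : Fin r × Fin r => x.1 < x.2),
      ((kk x.1 : ℚ) - kk x.2) ^ 2 = r * ((∑ α, kk α ^ 2 : ℤ) : ℚ) - k ^ 2 := by
    have hsumℚ : ∑ α, (kk α : ℚ) = k := by exact_mod_cast hsum
    rw [sum_filter_lt_sub_sq fun α => (kk α : ℚ), Fintype.card_fin, hsumℚ]
    push_cast
    rfl
  have hN : (p : ℚ) * k * (r - k) / (2 * r) = p / (2 * r) * (r * k - k ^ 2) := by ring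
  have hr₀ : (0 : ℚ) < r := by exact_mod_cast hr
  have hp₀ : (0 : ℚ) < p := by exact_mod_cast hp
  have hcoeff : (0 : ℚ) < p / (2 * r) := by positivity
  have hkS : (k : ℤ) ≤ ∑ α, kk α ^ 2 := hsum ▸ Int.sum_le_sum_sq univ kk
  rw [hpairs, hN, mul_right_inj' hcoeff.ne', sub_left_inj, mul_right_inj' hr₀.ne']
  refine ⟨mul_le_mul_of_nonneg_left (sub_le_sub_right ?_ _) hcoeff.le, ?_⟩
  · exact mul_le_mul_of_nonneg_left (by exact_mod_cast hkS) hr₀.le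
  · rw [← Int.cast_natCast, Int.cast_inj, ← hsum, Int.sum_sq_eq_sum_iff]
    simp only [mem_univ, true_implies]

/-- Let `0 ≤ k < r` and `p ≥ 1`, and set `N = pk(r−k)/(2r)`. For any integers
`k₁, …, k_r` summing to `k`, one has `(p/(2r)) ∑_{α<β} (k_α − k_β)² ≥ N`, with equality
if and only if each `k_α ∈ {0, 1}` (so exactly `k` of them equal `1`). -/
theorem minimal_discriminant_bound (p r k : ℕ) (hp : 1 ≤ p) (hr : 1 ≤ r)
    (hk : k < r) (kk : Fin r → ℤ) (hsum : ∑ α, kk α = (k : ℤ)) :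
    (((p : ℚ) * k * (r - k)) / (2 * r) ≤
        ((p : ℚ) / (2 * r)) *
          ∑ x ∈ Finset.univ.filter (fun x : Fin r × Fin r => x.1 < x.2),
            ((kk x.1 : ℚ) - (kk x.2 : ℚ)) ^ 2) ∧
    ((((p : ℚ) / (2 * r)) *
          ∑ x ∈ Finset.univ.filter (fun x : Fin r × Fin r => x.1 < x.2),
            ((kk x.1 : ℚ) - (kk x.2 : ℚ)) ^ 2 =
        ((p : ℚ) * k * (r - k)) / (2 * r)) ↔
      ∀ α, kk α = 0 ∨ kk α = 1) :=
  minimal_discriminant_bound_general p r k hp hr kk hsum
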